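/- The two oppositely winding trajectories ω₁ = ((N,0),(N−1,0),…,(1,0),(1,1),(N,1),(N,0)) and ω₂ = ((N,0),(1,0),(1,1),(2,1),…,(N,1),(N,0)) of the two-ring ratchet have exactly the same entropy flux: s(ω₁) = s(ω₂) = β(E_N − E_1), where s(ω) = Σ_steps log[k(x,y)/k(y,x)] sums the log-ratios of forward to backward rates along the successive transitions of ω. -/

import Mathlib

/-- Transition rates of the two-ring ratchet. States are pairs `(i, n)` with
`i : ZMod N` (site `N` is identified with `0`) and `n : Bool` (`false` = outer ring
`n = 0`, `true` = inner ring `n = 1`): on the outer ring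
`k((i,0),(i±1,0)) = exp[(β/2)(E_i − E_{i±1})]`, on the inner ring
`k((i,1),(i±1,1)) = 1`, and between the rings `k((i,n),(i,1−n)) = a`. -/
noncomputable def ratchetRate (N : ℕ) (β a : ℝ) (E : ZMod N → ℝ) :
    ZMod N × Bool → ZMod N × Bool → ℝ := fun x y =>
  if x.2 = y.2 then
    if x.2 = false then
      if y.1 = x.1 + 1 ∨ y.1 = x.1 - 1 then Real.exp ((β / 2) * (E x.1 - E y.1)) else 0
    else
      if y.1 = x.1 + 1 ∨ y.1 = x.1 - 1 then 1 else 0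
  else
    if y.1 = x.1 then a else 0

/-- Entropy flux of a trajectory: the sum of `log[k(x,y)/k(y,x)]` over its
successive transitions. -/
noncomputable def entFlux {S : Type*} (k : S → S → ℝ) : List S → ℝ
  | x :: y :: rest => Real.log (k x y / k y x) + entFlux k (y :: rest)
  | _ => 0

/-- The trajectory `ω₁ = ((N,0),(N−1,0),…,(1,0),(1,1),(N,1),(N,0))`
(clockwise: down the outer ring, flip, one inner step back, flip). -/
def traj₁ (N : ℕ) : List (ZMod N × Bool) :=
  ((List.range N).map fun j => (((N - j : ℕ) : ZMod N), false))
    ++ [((1 : ZMod N), true), ((N : ZMod N), true), ((N : ZMod N), false)]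

/-- The trajectory `ω₂ = ((N,0),(1,0),(1,1),(2,1),…,(N,1),(N,0))`
(counter-clockwise: one outer step, flip, around the inner ring, flip). -/
def traj₂ (N : ℕ) : List (ZMod N × Bool) :=
  [((N : ZMod N), false), ((1 : ZMod N), false)]
    ++ ((List.range N).map fun j => (((j + 1 : ℕ) : ZMod N), true))
    ++ [((N : ZMod N), false)]

lemma log_exp_div (A B : ℝ) : Real.log (Real.exp A / Real.exp B) = A - B := by
  rw [← Real.exp_sub, Real.log_exp]

lemma entFlux_cons_cons {S : Type*} (k : S → S → ℝ) (x y : S) (rest : List S) :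
    entFlux k (x :: y :: rest) = Real.log (k x y / k y x) + entFlux k (y :: rest) := rfl

lemma entFlux_chain {S : Type*} (k : S → S → ℝ) (g : ℕ → S) (φ : ℕ → ℝ) :
    ∀ (n s : ℕ), (∀ j, s ≤ j → j < s + n →
      Real.log (k (g j) (g (j+1)) / k (g (j+1)) (g j)) = φ j - φ (j+1)) →
    entFlux k ((List.range' s (n+1)).map g) = φ s - φ (s + n) := by
  intro n
  induction n with
  | zero => intro s h; simp [List.range'_succ, entFlux]
  | succ n ih =>
    intro s h
    have e : (List.range' s (n+1+1)).map g = g s :: (List.range' (s+1) (n+1)).map g := by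
      rw [List.range'_succ]; rfl
    have e2 : (List.range' (s+1) (n+1)).map g = g (s+1) :: (List.range' (s+1+1) n).map g := by
      rw [List.range'_succ]; rfl
    rw [e, e2, entFlux_cons_cons, ← e2,
      ih (s+1) (fun j hj hj2 => h j (by omega) (by omega)),
      h s (le_refl s) (by omega), show s + 1 + n = s + (n+1) by omega]
    ring

lemma rate_outer (N : ℕ) (β a : ℝ) (E : ZMod N → ℝ) (x y : ZMod N)
    (h : y = x + 1 ∨ y = x - 1) :
    ratchetRate N β a E (x, false) (y, false) = Real.exp ((β / 2) * (E x - E y)) := by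
  simp [ratchetRate, h]

lemma rate_inner (N : ℕ) (β a : ℝ) (E : ZMod N → ℝ) (x y : ZMod N)
    (h : y = x + 1 ∨ y = x - 1) :
    ratchetRate N β a E (x, true) (y, true) = 1 := by
  simp [ratchetRate, h]

lemma rate_flip (N : ℕ) (β a : ℝ) (E : ZMod N → ℝ) (x : ZMod N) (b c : Bool)
    (h : b ≠ c) :
    ratchetRate N β a E (x, b) (x, c) = a := by
  simp [ratchetRate, h]

lemma log_outer (N : ℕ) (β a : ℝ) (E : ZMod N → ℝ) (x y : ZMod N)
    (h1 : y = x + 1 ∨ y = x - 1) (h2 : x = y + 1 ∨ x = y - 1) :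
    Real.log (ratchetRate N β a E (x, false) (y, false)
      / ratchetRate N β a E (y, false) (x, false)) = β * (E x - E y) := by
  rw [rate_outer N β a E x y h1, rate_outer N β a E y x h2, log_exp_div]
  ring

lemma log_inner (N : ℕ) (β a : ℝ) (E : ZMod N → ℝ) (x y : ZMod N)
    (h1 : y = x + 1 ∨ y = x - 1) (h2 : x = y + 1 ∨ x = y - 1) :
    Real.log (ratchetRate N β a E (x, true) (y, true)
      / ratchetRate N β a E (y, true) (x, true)) = 0 := by
  rw [rate_inner N β a E x y h1, rate_inner N β a E y x h2]
  simp

lemma log_flip (N : ℕ) (β a : ℝ) (E : ZMod N → ℝ) (x : ZMod N) (b c : Bool)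
    (h : b ≠ c) (ha : a ≠ 0) :
    Real.log (ratchetRate N β a E (x, b) (x, c)
      / ratchetRate N β a E (x, c) (x, b)) = 0 := by
  rw [rate_flip N β a E x b c h, rate_flip N β a E x c b (Ne.symm h), div_self ha,
    Real.log_one]

/-- Enumeration of traj₁ -/
def g1 (N : ℕ) : ℕ → ZMod N × Bool := fun j =>
  if j < N then (((N - j : ℕ) : ZMod N), false)
  else if j = N then ((1 : ZMod N), true)
  else if j = N + 1 then ((N : ZMod N), true)
  else ((N : ZMod N), false)

noncomputable def ph1 (N : ℕ) (β : ℝ) (E : ZMod N → ℝ) : ℕ → ℝ := fun j =>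
  if j < N then β * E ((N - j : ℕ)) else β * E 1

/-- Enumeration of traj₂ -/
def g2 (N : ℕ) : ℕ → ZMod N × Bool := fun j =>
  if j = 0 then ((N : ZMod N), false)
  else if j = 1 then ((1 : ZMod N), false)
  else if j ≤ N + 1 then (((j - 1 : ℕ) : ZMod N), true)
  else ((N : ZMod N), false)

noncomputable def ph2 (N : ℕ) (β : ℝ) (E : ZMod N → ℝ) : ℕ → ℝ := fun j =>
  if j = 0 then β * E ((N : ℕ)) else β * E 1

/-- The two oppositely winding trajectories `ω₁` and `ω₂` of the two-ring ratchet carry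
exactly the same entropy flux `s(ω₁) = s(ω₂) = β(E_N − E_1)`. -/
theorem oppositely_winding_same_entropy_flux
    (N : ℕ) (hN : 3 ≤ N) (β a : ℝ) (hβ : 0 < β) (ha : 0 < a) (E : ZMod N → ℝ)
    (hE : ∀ j : ℕ, 1 ≤ j → j < N → E (j : ZMod N) < E ((j + 1 : ℕ) : ZMod N)) :
    entFlux (ratchetRate N β a E) (traj₁ N)
        = β * (E ((N : ℕ) : ZMod N) - E (1 : ZMod N)) ∧
    entFlux (ratchetRate N β a E) (traj₂ N)
        = β * (E ((N : ℕ) : ZMod N) - E (1 : ZMod N)) := by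
  have ha' : a ≠ 0 := ne_of_gt ha
  have hNcast : ((N : ℕ) : ZMod N) = 0 := ZMod.natCast_self N
  constructor
  · -- traj₁
    have hsplit : List.range' 0 (N + 2 + 1) = List.range' 0 N ++ List.range' N 3 := by
      have h1 := @List.range'_append 0 N 3 1
      simp only [one_mul, zero_add] at h1
      rw [h1]
    have hA : (List.range' 0 N).map (g1 N)
        = (List.range N).map fun j => (((N - j : ℕ) : ZMod N), false) := by
      rw [← List.range_eq_range']
      apply List.map_congr_left
      intro j hj
      rw [List.mem_range] at hj
      simp [g1, hj]
    have hB : (List.range' N 3).map (g1 N)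
        = [((1 : ZMod N), true), ((N : ZMod N), true), ((N : ZMod N), false)] := by
      have : List.range' N 3 = [N, N+1, N+2] := by simp [List.range'_succ]
      rw [this]
      simp [g1, Nat.lt_irrefl, show ¬ N + 1 < N by omega, show N + 1 ≠ N by omega,
        show ¬ N + 2 < N by omega, show N + 2 ≠ N by omega, show N + 2 ≠ N + 1 by omega]
    have hlist : traj₁ N = (List.range' 0 (N + 2 + 1)).map (g1 N) := by
      rw [hsplit, List.map_append, hA, hB, traj₁]
    rw [hlist, entFlux_chain (ratchetRate N β a E) (g1 N) (ph1 N β E) (N+2) 0 ?_]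
    · have hv1 : ph1 N β E 0 = β * E ((N : ℕ)) := by
        simp [ph1, show 0 < N by omega]
      have hv2 : ph1 N β E (0 + (N + 2)) = β * E 1 := by
        simp [ph1, show ¬ 0 + (N + 2) < N by omega]
      rw [hv1, hv2]; ring
    · intro j _ hj
      simp only [zero_add] at hj
      rcases lt_trichotomy j (N-1) with hc | hc | hc
      · -- outer ring step
        have h1 : j < N := by omega
        have h2 : j + 1 < N := by omega
        have hAB : ((N - j : ℕ) : ZMod N) = ((N - (j+1) : ℕ) : ZMod N) + 1 := by
          rw [show N - j = (N - (j+1)) + 1 by omega]; push_cast; ring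
        have e1 : g1 N j = (((N - j : ℕ) : ZMod N), false) := by simp [g1, h1]
        have e2 : g1 N (j+1) = (((N - (j+1) : ℕ) : ZMod N), false) := by simp [g1, h2]
        rw [e1, e2, log_outer N β a E _ _ (Or.inr (eq_sub_of_add_eq hAB.symm)) (Or.inl hAB)]
        simp only [ph1, h1, h2, if_pos]
        ring
      · -- flip at site 1 : (1,0) → (1,1)
        have h1 : j < N := by omega
        have hj2 : j + 1 = N := by omega
        have hNj : N - j = 1 := by omega
        have e1 : g1 N j = ((1 : ZMod N), false) := by simp [g1, h1, hNj]
        have e2 : g1 N (j+1) = ((1 : ZMod N), true) := by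
          rw [hj2]; simp [g1, Nat.lt_irrefl]
        rw [e1, e2, log_flip N β a E 1 false true (by simp) ha']
        simp [ph1, h1, hNj, hj2, Nat.lt_irrefl]
      · -- j = N or j = N+1
        have hj' : j = N ∨ j = N + 1 := by omega
        rcases hj' with h | h
        · -- inner step (1,1) → (N,1)
          rw [h]
          have e1 : g1 N N = ((1 : ZMod N), true) := by simp [g1, Nat.lt_irrefl]
          have e2 : g1 N (N+1) = (((N : ℕ) : ZMod N), true) := by
            simp [g1, show ¬ N + 1 < N by omega, show N + 1 ≠ N by omega]
          have hor : ((N : ℕ) : ZMod N) = (1 : ZMod N) + 1 ∨ ((N : ℕ) : ZMod N) = (1 : ZMod N) - 1 := by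
            right; rw [hNcast]; simp
          have hor' : (1 : ZMod N) = ((N : ℕ) : ZMod N) + 1 ∨ (1 : ZMod N) = ((N : ℕ) : ZMod N) - 1 := by
            left; rw [hNcast]; simp
          rw [e1, e2, log_inner N β a E _ _ hor hor']
          simp [ph1, Nat.lt_irrefl, show ¬ N + 1 < N by omega]
        · -- final flip (N,1) → (N,0)
          rw [h]
          have e1 : g1 N (N+1) = (((N : ℕ) : ZMod N), true) := by
            simp [g1, show ¬ N + 1 < N by omega, show N + 1 ≠ N by omega]
          have e2 : g1 N (N+1+1) = (((N : ℕ) : ZMod N), false) := by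
            simp [g1, show ¬ N + 1 + 1 < N by omega, show N + 1 + 1 ≠ N by omega,
              show N + 1 + 1 ≠ N + 1 by omega]
          rw [e1, e2, log_flip N β a E _ true false (by simp) ha']
          simp [ph1, show ¬ N + 1 < N by omega, show ¬ N + 1 + 1 < N by omega]
  · -- traj₂
    have h1 : List.range' 0 2 ++ List.range' 2 N = List.range' 0 (N + 2) := by
      have := @List.range'_append 0 2 N 1
      simpa [Nat.add_comm] using this
    have h2 : List.range' 0 (N + 2) ++ List.range' (N+2) 1 = List.range' 0 (1 + (N + 2)) := by
      have := @List.range'_append 0 (N+2) 1 1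
      simpa [Nat.add_comm] using this
    have hsplit : List.range' 0 (N + 2 + 1)
        = (List.range' 0 2 ++ List.range' 2 N) ++ List.range' (N+2) 1 := by
      rw [h1, h2]
      congr 1
      omega
    have hA : (List.range' 0 2).map (g2 N)
        = [(((N : ℕ) : ZMod N), false), ((1 : ZMod N), false)] := by
      have : List.range' 0 2 = [0, 1] := by simp [List.range'_succ]
      rw [this]; simp [g2]
    have hB : (List.range' 2 N).map (g2 N)
        = (List.range N).map fun j => (((j + 1 : ℕ) : ZMod N), true) := by
      rw [List.range'_eq_map_range, List.map_map]
      apply List.map_congr_left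
      intro j hj
      rw [List.mem_range] at hj
      simp [Function.comp, g2, show ¬ 2 + j = 0 by omega, show ¬ 2 + j = 1 by omega,
        show 2 + j ≤ N + 1 by omega, show 2 + j - 1 = j + 1 by omega]
    have hC : (List.range' (N+2) 1).map (g2 N) = [(((N : ℕ) : ZMod N), false)] := by
      have : List.range' (N+2) 1 = [N+2] := by simp
      rw [this]
      simp [g2, show ¬ N + 2 = 0 by omega, show ¬ N + 2 = 1 by omega,
        show ¬ N + 2 ≤ N + 1 by omega]
    have hlist : traj₂ N = (List.range' 0 (N + 2 + 1)).map (g2 N) := by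
      rw [hsplit, List.map_append, List.map_append, hA, hB, hC, traj₂]
    rw [hlist, entFlux_chain (ratchetRate N β a E) (g2 N) (ph2 N β E) (N+2) 0 ?_]
    · have hv1 : ph2 N β E 0 = β * E ((N : ℕ)) := by simp [ph2]
      have hv2 : ph2 N β E (0 + (N + 2)) = β * E 1 := by
        simp [ph2, show ¬ 0 + (N + 2) = 0 by omega]
      rw [hv1, hv2]; ring
    · intro j _ hj
      simp only [zero_add] at hj
      rcases Nat.lt_or_ge j 2 with hc | hc
      · interval_cases j
        · -- (N,0) → (1,0)
          have e1 : g2 N 0 = (((N : ℕ) : ZMod N), false) := by simp [g2]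
          have e2 : g2 N (0+1) = ((1 : ZMod N), false) := by simp [g2]
          have hor : (1 : ZMod N) = ((N : ℕ) : ZMod N) + 1 ∨ (1 : ZMod N) = ((N : ℕ) : ZMod N) - 1 := by
            left; rw [hNcast]; simp
          have hor' : ((N : ℕ) : ZMod N) = (1 : ZMod N) + 1 ∨ ((N : ℕ) : ZMod N) = (1 : ZMod N) - 1 := by
            right; rw [hNcast]; simp
          rw [e1, e2, log_outer N β a E _ _ hor hor']
          simp [ph2]
          ring
        · -- flip (1,0) → (1,1)
          have e1 : g2 N 1 = ((1 : ZMod N), false) := by simp [g2]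
          have e2 : g2 N (1+1) = ((1 : ZMod N), true) := by
            simp [g2, show 1 + 1 ≤ N + 1 by omega]
          rw [e1, e2, log_flip N β a E 1 false true (by simp) ha']
          simp [ph2]
      · rcases Nat.lt_or_ge j (N+1) with hd | hd
        · -- inner step ((j-1),1) → (j,1)
          have e1 : g2 N j = (((j - 1 : ℕ) : ZMod N), true) := by
            simp [g2, show ¬ j = 0 by omega, show ¬ j = 1 by omega,
              show j ≤ N + 1 by omega]
          have e2 : g2 N (j+1) = (((j : ℕ) : ZMod N), true) := by
            simp [g2, show ¬ j = 0 by omega, show ¬ j + 1 = 0 by omega, show ¬ j + 1 = 1 by omega,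
              show j + 1 ≤ N + 1 by omega, show j + 1 - 1 = j by omega]
          have hAB : ((j : ℕ) : ZMod N) = ((j - 1 : ℕ) : ZMod N) + 1 := by
            conv_lhs => rw [show j = (j - 1) + 1 by omega]
            push_cast
            ring
          rw [e1, e2, log_inner N β a E _ _ (Or.inl hAB) (Or.inr (eq_sub_of_add_eq hAB.symm))]
          simp [ph2, show ¬ j = 0 by omega, show ¬ j + 1 = 0 by omega]
        · -- final flip (N,1) → (N,0), j = N+1
          have h : j = N + 1 := by omega
          rw [h]
          have e1 : g2 N (N+1) = (((N : ℕ) : ZMod N), true) := by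
            simp [g2, show ¬ N = 0 by omega, show ¬ N + 1 = 0 by omega, show ¬ N + 1 = 1 by omega,
              show N + 1 ≤ N + 1 from le_refl _, show N + 1 - 1 = N by omega]
          have e2 : g2 N (N+1+1) = (((N : ℕ) : ZMod N), false) := by
            simp [g2, show ¬ N + 1 + 1 = 0 by omega, show ¬ N + 1 + 1 = 1 by omega,
              show ¬ N + 1 + 1 ≤ N + 1 by omega]
          rw [e1, e2, log_flip N β a E _ true false (by simp) ha']
          simp [ph2, show ¬ N + 1 = 0 by omega, show ¬ N + 1 + 1 = 0 by omega]
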